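/- Let a = a₁ + i a₂ be a complex number with |a| ≤ k < 1. Then the coefficients a₁₁ = 2a₂/(-a₂² - (1-a₁)²), a₁₂ = (a₁² - 1 + a₂²)/(-a₂² - (1-a₁)²), a₂₁ = (-a₂² + 1 - a₁²)/(a₂² + (1-a₁)²), a₂₂ = 2a₂/(a₂² + (1-a₁)²) satisfy the ellipticity conditions 4·a₁₂·a₂₁ - (a₁₁ + a₂₂)² > 0 and a₁₂ > 0. -/
import Mathlib


/-- Ellipticity conditions for the coefficients of the first-order system
derived from the Beltrami-type equation with |a| ≤ k < 1. -/
theorem ellipticity_of_dilatation_bound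
    (a₁ a₂ k : ℝ) (hk0 : 0 ≤ k) (hk1 : k < 1)
    (ha : a₁ ^ 2 + a₂ ^ 2 ≤ k ^ 2) :
    let a₁₁ := 2 * a₂ / (-a₂ ^ 2 - (1 - a₁) ^ 2)
    let a₁₂ := (a₁ ^ 2 - 1 + a₂ ^ 2) / (-a₂ ^ 2 - (1 - a₁) ^ 2)
    let a₂₁ := (-a₂ ^ 2 + 1 - a₁ ^ 2) / (a₂ ^ 2 + (1 - a₁) ^ 2)
    let a₂₂ := 2 * a₂ / (a₂ ^ 2 + (1 - a₁) ^ 2)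
    4 * a₁₂ * a₂₁ - (a₁₁ + a₂₂) ^ 2 > 0 ∧ a₁₂ > 0 := by
  intro a₁₁ a₁₂ a₂₁ a₂₂
  have hk2 : k ^ 2 < 1 := by nlinarith
  have hlt : a₁ ^ 2 + a₂ ^ 2 < 1 := lt_of_le_of_lt ha hk2
  have hD : 0 < a₂ ^ 2 + (1 - a₁) ^ 2 := by nlinarith [sq_nonneg a₂, sq_nonneg (1 - a₁)]
  have h12 : a₁₂ = (1 - a₁ ^ 2 - a₂ ^ 2) / (a₂ ^ 2 + (1 - a₁) ^ 2) := by
    show (a₁ ^ 2 - 1 + a₂ ^ 2) / (-a₂ ^ 2 - (1 - a₁) ^ 2) = _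
    rw [show -a₂ ^ 2 - (1 - a₁) ^ 2 = -(a₂ ^ 2 + (1 - a₁) ^ 2) by ring,
        div_neg, ← neg_div]
    ring_nf
  have h21 : a₂₁ = (1 - a₁ ^ 2 - a₂ ^ 2) / (a₂ ^ 2 + (1 - a₁) ^ 2) := by
    show (-a₂ ^ 2 + 1 - a₁ ^ 2) / (a₂ ^ 2 + (1 - a₁) ^ 2) = _
    ring_nf
  have hsum : a₁₁ + a₂₂ = 0 := by
    show 2 * a₂ / (-a₂ ^ 2 - (1 - a₁) ^ 2) + 2 * a₂ / (a₂ ^ 2 + (1 - a₁) ^ 2) = 0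
    rw [show -a₂ ^ 2 - (1 - a₁) ^ 2 = -(a₂ ^ 2 + (1 - a₁) ^ 2) by ring, div_neg]
    ring
  have hpos : 0 < (1 - a₁ ^ 2 - a₂ ^ 2) / (a₂ ^ 2 + (1 - a₁) ^ 2) :=
    div_pos (by linarith) hD
  refine ⟨?_, by rw [h12]; exact hpos⟩
  rw [h12, h21, hsum]
  nlinarith [hpos]
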